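/- The family of forest polynomials {β_F}, as F ranges over indexed forests with support in the positive integers, forms a basis of the polynomial ring ℚ[x_1, x_2, ...]. In particular, the monomial x^{c(F)} = ∏_i x_i^{c_i(F)} is the leading term of β_F in reverse lexicographic order. -/

import Mathlib

/-- Plane binary trees. `leaf` is a leaf, `node l r` an internal node. -/
inductive BT where
  | leaf : BT
  | node : BT → BT → BT
deriving DecidableEq

/-- Number of internal nodes. -/
def BT.size : BT → ℕ
  | .leaf => 0
  | .node l r => l.size + r.size + 1

/-- Multiset of values `ρ_F(v)` (canonical label of the leftmost descendant,
reached by following left edges) over the internal nodes of a tree whose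
inorder canonical labels start at `a`. -/
def BT.rhoMS : BT → ℤ → Multiset ℤ
  | .leaf, _ => 0
  | .node l r, a => a ::ₘ (l.rhoMS a + r.rhoMS (a + l.size + 1))

/-- Multiset of canonical labels of internal nodes whose left child is a leaf
("left support"). -/
def BT.lsuppMS : BT → ℤ → Multiset ℤ
  | .leaf, _ => 0
  | .node l r, a =>
      (if l = BT.leaf then ({a} : Multiset ℤ) else 0) + l.lsuppMS a
        + r.lsuppMS (a + l.size + 1)

/-- The flagged generating polynomial of a binary tree with inorder labels
starting at `a`, where every label is at least `lo` (lower bound transmitted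
from the parent), at most the `ρ`-value of the node, labels weakly increase
down left edges and strictly increase down right edges. The variables are
`x_1, x_2, …` (the variable `X 0` is unused). -/
noncomputable def BT.polyAux : BT → ℤ → ℕ → MvPolynomial ℕ ℚ
  | .leaf, _, _ => 1
  | .node l r, a, lo =>
      ∑ k ∈ Finset.Icc lo a.toNat,
        MvPolynomial.X k * l.polyAux a k * r.polyAux (a + l.size + 1) (k + 1)

/-- The forest polynomial of a single indexed tree with support starting at `a`. -/
noncomputable def BT.poly (t : BT) (a : ℤ) : MvPolynomial ℕ ℚ := t.polyAux a 1

/-- An indexed forest: a list of binary trees together with the starting points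
of their supports, the supports being maximal intervals (consecutive supports
leave a gap of at least one integer). -/
structure IndexedForest where
  trees : List (ℤ × BT)
  nonempty : ∀ p ∈ trees, p.2 ≠ BT.leaf
  gaps : trees.Chain' (fun p q => p.1 + (p.2.size : ℤ) + 1 ≤ q.1)

/-- The support of an indexed forest, as a set of integers. -/
def IndexedForest.Supp (F : IndexedForest) : Set ℤ :=
  {i | ∃ p ∈ F.trees, p.1 ≤ i ∧ i < p.1 + (p.2.size : ℤ)}

/-- The multiset of `ρ_F`-values of all internal nodes of `F`. -/
def IndexedForest.rhoMS (F : IndexedForest) : Multiset ℤ :=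
  (F.trees.map (fun p => p.2.rhoMS p.1)).sum

/-- The `ℕ`-vector `c(F)`: `c_i` counts internal nodes with `ρ_F`-value `i`. -/
def cOf (F : IndexedForest) : ℤ → ℕ := fun i => F.rhoMS.count i

/-- The multiset of left-support labels of `F`. -/
def IndexedForest.lsuppMS (F : IndexedForest) : Multiset ℤ :=
  (F.trees.map (fun p => p.2.lsuppMS p.1)).sum

/-- Forest polynomial of a list of located trees. -/
noncomputable def polyL (ts : List (ℤ × BT)) : MvPolynomial ℕ ℚ :=
  (ts.map (fun p => p.2.poly p.1)).prod

/-- The forest polynomial of an indexed forest. -/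
noncomputable def IndexedForest.poly (F : IndexedForest) : MvPolynomial ℕ ℚ :=
  polyL F.trees

/-- Number of internal nodes of a forest. -/
def IndexedForest.size (F : IndexedForest) : ℕ :=
  (F.trees.map (fun p => p.2.size)).sum

/-!
Order monomials colexicographically, i.e. by the exponent at the largest index where they
differ. In the recursion `β = ∑_{k ≤ a} x_k β_l β_r` for a tree every summand is monic, and the
summand with `k = a` strictly dominates the others, so `β_F` is monic with leading monomial
`x^{c(F)}`. Independence and spanning then follow by triangularity once `F ↦ c(F)` is known to be
a bijection onto the exponents avoiding `x_0`. For that, fill every gap of `F` with empty trees: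
`F` becomes a sequence of trees placed left to right with one-point gaps, the first tree is
non-empty exactly when its start `b` occurs in `c`, and replacing a first root by its two subtrees
gives a sequence of the same kind with one copy of `b` removed from `c`. So `c` is decoded
greedily, and every finite multiset of positions is reached.
-/

open MvPolynomial
open scoped MonomialOrder

namespace MonomialOrder

section Colex

variable {σ : Type*} [LinearOrder σ] [WellFoundedLT σ]

noncomputable def colex : MonomialOrder σ where
  syn := Colex (σ →₀ ℕ)
  toSyn := { toEquiv := toColex, map_add' := toColex_add }
  toSyn_monotone := Finsupp.toColex_monotone

theorem colex_lt_iff {c d : σ →₀ ℕ} :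
    c ≺[colex] d ↔ ∃ i, (∀ j, i < j → c j = d j) ∧ c i < d i :=
  Finsupp.Colex.lt_iff

theorem colex_single_lt_single {i j : σ} (h : i < j) :
    Finsupp.single i 1 ≺[colex] Finsupp.single j 1 :=
  Finsupp.Colex.single_lt_iff.2 h

end Colex

variable {σ R : Type*} {m : MonomialOrder σ}

section CommSemiring

variable [CommSemiring R]

theorem Monic.degree_mul [Nontrivial R] {f g : MvPolynomial σ R} (hf : m.Monic f)
    (hg : m.Monic g) : m.degree (f * g) = m.degree f + m.degree g :=
  degree_mul_of_mul_leadingCoeff_ne_zero <| by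
    simp [hf.leadingCoeff_eq_one, hg.leadingCoeff_eq_one]

theorem Monic.add_sum_of_degree_lt {ι : Type*} {f : MvPolynomial σ R}
    {g : ι → MvPolynomial σ R} {s : Finset ι} (hf : m.Monic f)
    (hg : ∀ i ∈ s, m.degree (g i) ≺[m] m.degree f) :
    m.Monic (f + ∑ i ∈ s, g i) ∧ m.degree (f + ∑ i ∈ s, g i) = m.degree f := by
  classical
  induction s using Finset.induction_on with
  | empty => simpa using hf
  | insert j s hj ih =>
    obtain ⟨hmon, hdeg⟩ := ih fun i hi => hg i (Finset.mem_insert_of_mem hi)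
    have hlt : m.degree (g j) ≺[m] m.degree (f + ∑ i ∈ s, g i) := by
      rw [hdeg]; exact hg j (Finset.mem_insert_self j s)
    rw [Finset.sum_insert hj, add_left_comm, add_comm (g j)]
    refine ⟨hmon.add_of_lt hlt, ?_⟩
    rw [degree_add_of_lt hlt, hdeg]

end CommSemiring

variable [CommRing R] {ι : Type*} {b : ι → MvPolynomial σ R}

theorem linearIndependent_of_monic (hb : ∀ i, m.Monic (b i))
    (hinj : Function.Injective (m.degree ∘ b)) : LinearIndependent R b := by
  classical
  rw [linearIndependent_iff]
  intro l hl
  by_contra hl0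
  obtain ⟨i, hi, hmax⟩ := l.support.exists_max_image (fun i => m.toSyn (m.degree (b i)))
    (Finsupp.support_nonempty_iff.2 hl0)
  have hcoeff := congr_arg (coeff (m.degree (b i))) hl
  rw [Finsupp.linearCombination_apply, Finsupp.sum, coeff_sum, coeff_zero,
    Finset.sum_eq_single i] at hcoeff
  · simp [(hb i).coeff_degree, Finsupp.mem_support_iff.1 hi] at hcoeff
  · intro j hj hji
    have hlt : m.degree (b j) ≺[m] m.degree (b i) :=
      lt_of_le_of_ne (hmax j hj) fun h => hji (hinj (m.toSyn.injective h))
    rw [coeff_smul, m.coeff_eq_zero_of_lt hlt, smul_zero]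
  · exact absurd hi

theorem restrictSupport_le_span_of_monic {s : Set (σ →₀ ℕ)} (hb : ∀ i, m.Monic (b i))
    (hbs : ∀ i, b i ∈ restrictSupport R s) (hs : s ⊆ Set.range (m.degree ∘ b)) :
    restrictSupport R s ≤ Submodule.span R (Set.range b) := by
  classical
  intro f hf
  induction hD : m.toSyn (m.degree f) using WellFoundedLT.induction generalizing f with
  | ind D ih =>
  by_cases hf0 : f = 0
  · exact hf0 ▸ Submodule.zero_mem _
  obtain ⟨i, hi⟩ : ∃ i, m.degree (b i) = m.degree f := hs (hf (m.degree_mem_support hf0))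
  set f' := f - m.leadingCoeff f • b i
  have hf' : f' ∈ restrictSupport R s :=
    Submodule.sub_mem _ hf (Submodule.smul_mem _ _ (hbs i))
  have hf'_eq : f = f' + m.leadingCoeff f • b i := by simp [f']
  rw [hf'_eq]
  refine Submodule.add_mem _ ?_ (Submodule.smul_mem _ _ (Submodule.subset_span ⟨i, rfl⟩))
  by_cases hf'0 : f' = 0
  · exact hf'0 ▸ Submodule.zero_mem _
  refine ih _ ?_ hf' rfl
  rw [← hD]
  have hsupp : ∀ c ∈ f'.support, c ≼[m] m.degree f := by
    intro c hc
    rcases Finset.mem_union.1 (support_sub σ f _ hc) with hc | hc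
    · exact m.le_degree hc
    · exact hi ▸ m.le_degree (support_smul hc)
  have htop : coeff (m.degree f) f' = 0 := by
    rw [coeff_sub, coeff_smul, ← hi, (hb i).coeff_degree, hi, smul_eq_mul, mul_one]
    exact sub_self _
  refine lt_of_le_of_ne (hsupp _ (m.degree_mem_support hf'0)) fun h => ?_
  exact (mem_support_iff.1 (m.degree_mem_support hf'0)) (m.toSyn.injective h ▸ htop)

end MonomialOrder

/-- The exponent vector `∑_{s ∈ S} e_s`; entries `s ≤ 0` all land on the unused index `0`. -/
noncomputable def exponentOf : Multiset ℤ →+ (ℕ →₀ ℕ) :=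
  Multiset.toFinsupp.toAddMonoidHom.comp (Multiset.mapAddMonoidHom Int.toNat)

theorem exponentOf_cons (a : ℤ) (S : Multiset ℤ) :
    exponentOf (a ::ₘ S) = Finsupp.single a.toNat 1 + exponentOf S := by
  rw [← Multiset.singleton_add, map_add]
  simp [exponentOf]

theorem map_natCast_toMultiset_exponentOf {S : Multiset ℤ} (hS : ∀ s ∈ S, 0 ≤ s) :
    (Finsupp.toMultiset (exponentOf S)).map ((↑) : ℕ → ℤ) = S := by
  simp only [exponentOf, AddMonoidHom.coe_comp, AddEquiv.coe_toAddMonoidHom, Function.comp_apply,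
    Multiset.coe_mapAddMonoidHom, Multiset.toFinsupp_toMultiset, Multiset.map_map]
  exact (Multiset.map_congr rfl fun s hs => Int.toNat_of_nonneg (hS s hs)).trans S.map_id

theorem exponentOf_apply {S : Multiset ℤ} (hS : ∀ s ∈ S, 0 ≤ s) (i : ℕ) :
    exponentOf S i = S.count (i : ℤ) := by
  conv_rhs => rw [← map_natCast_toMultiset_exponentOf hS]
  rw [Multiset.count_map_eq_count' _ _ Nat.cast_injective, Finsupp.count_toMultiset]

theorem exponentOf_injOn :
    Set.InjOn exponentOf {S | ∀ s ∈ S, 0 ≤ s} := fun S hS T hT h => by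
  rw [← map_natCast_toMultiset_exponentOf hS, ← map_natCast_toMultiset_exponentOf hT, h]

theorem exponentOf_map_natCast (m : ℕ →₀ ℕ) :
    exponentOf ((Finsupp.toMultiset m).map ((↑) : ℕ → ℤ)) = m := by
  simp [exponentOf, Multiset.map_map]

theorem Multiset.exists_mem_of_mem_list_sum {α : Type*} {L : List (Multiset α)} {a : α}
    (h : a ∈ L.sum) : ∃ S ∈ L, a ∈ S := by
  rw [← Multiset.sum_coe, ← Multiset.join] at h
  simpa using Multiset.mem_join.1 h

namespace BT

theorem size_pos {t : BT} (ht : t ≠ leaf) : 0 < t.size := by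
  cases t with
  | leaf => exact absurd rfl ht
  | node l r => simp [size]

theorem le_of_mem_rhoMS {s : ℤ} : ∀ {t : BT} {a : ℤ}, s ∈ t.rhoMS a → a ≤ s
  | .leaf, _, h => by simp [rhoMS] at h
  | .node l r, a, h => by
    rw [rhoMS, Multiset.mem_cons, Multiset.mem_add] at h
    rcases h with rfl | h | h
    · exact le_rfl
    · exact le_of_mem_rhoMS h
    · have := le_of_mem_rhoMS h; omega

/-- The `ρ`-values of trees placed left to right from `b`, each followed by a one-point gap;
the encoding of forests in which every gap is filled by empty trees. -/
def rhoSeq : List BT → ℤ → Multiset ℤ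
  | [], _ => 0
  | t :: ts, b => t.rhoMS b + rhoSeq ts (b + t.size + 1)

theorem rhoSeq_leaf_cons (ts : List BT) (b : ℤ) : rhoSeq (leaf :: ts) b = rhoSeq ts (b + 1) := by
  simp [rhoSeq, rhoMS, size]

theorem rhoSeq_node_cons (l r : BT) (ts : List BT) (b : ℤ) :
    rhoSeq (node l r :: ts) b = b ::ₘ rhoSeq (l :: r :: ts) b := by
  simp only [rhoSeq, rhoMS, size, Multiset.cons_add, add_assoc]
  congr 4
  push_cast
  ring

theorem rhoSeq_replicate_leaf_append (n : ℕ) (ts : List BT) (b : ℤ) :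
    rhoSeq (List.replicate n leaf ++ ts) b = rhoSeq ts (b + n) := by
  induction n generalizing b with
  | zero => simp
  | succ n ih =>
    rw [List.replicate_succ, List.cons_append, rhoSeq_leaf_cons, ih]
    congr 1
    push_cast
    ring

theorem rhoSeq_append_replicate_leaf (n : ℕ) : ∀ (ts : List BT) (b : ℤ),
    rhoSeq (ts ++ List.replicate n leaf) b = rhoSeq ts b
  | [], b => by simpa [rhoSeq] using rhoSeq_replicate_leaf_append n [] b
  | t :: ts, b => by rw [List.cons_append, rhoSeq, rhoSeq, rhoSeq_append_replicate_leaf n ts]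

theorem le_of_mem_rhoSeq {s : ℤ} : ∀ {ts : List BT} {b : ℤ}, s ∈ rhoSeq ts b → b ≤ s
  | [], _, h => by simp [rhoSeq] at h
  | t :: ts, b, h => by
    rcases Multiset.mem_add.1 h with h | h
    · exact le_of_mem_rhoMS h
    · have := le_of_mem_rhoSeq h; omega

theorem self_mem_rhoSeq_cons_iff {t : BT} {ts : List BT} {b : ℤ} :
    b ∈ rhoSeq (t :: ts) b ↔ t ≠ leaf := by
  cases t with
  | leaf =>
    rw [rhoSeq_leaf_cons]
    simpa using fun h => (le_of_mem_rhoSeq h).not_gt (lt_add_one b)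
  | node l r => simp [rhoSeq_node_cons]

theorem eq_leaf_iff_of_rhoSeq_cons_eq {t t' : BT} {ts ts' : List BT} {b : ℤ}
    (h : rhoSeq (t :: ts) b = rhoSeq (t' :: ts') b) : t = leaf ↔ t' = leaf := by
  have h1 := @self_mem_rhoSeq_cons_iff t ts b
  rw [h] at h1
  exact not_iff_not.1 (h1.symm.trans self_mem_rhoSeq_cons_iff)

theorem eq_of_rhoSeq_eq : ∀ {ts ts' : List BT} {b : ℤ},
    ts.length = ts'.length → rhoSeq ts b = rhoSeq ts' b → ts = ts'
  | [], [], _, _, _ => rfl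
  | .leaf :: ts, .leaf :: ts', b, hlen, h => by
    rw [rhoSeq_leaf_cons, rhoSeq_leaf_cons] at h
    rw [eq_of_rhoSeq_eq (by simpa using hlen) h]
  | .node l r :: ts, .node l' r' :: ts', b, hlen, h => by
    rw [rhoSeq_node_cons, rhoSeq_node_cons, Multiset.cons_inj_right] at h
    have := eq_of_rhoSeq_eq (ts := l :: r :: ts) (ts' := l' :: r' :: ts') (by simpa using hlen) h
    simp_all
  | .leaf :: _, .node _ _ :: _, _, _, h => nomatch (eq_leaf_iff_of_rhoSeq_cons_eq h).1 rfl
  | .node _ _ :: _, .leaf :: _, _, _, h => nomatch (eq_leaf_iff_of_rhoSeq_cons_eq h).2 rfl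
termination_by ts => (ts.map fun t => 2 * t.size + 1).sum
decreasing_by all_goals (simp only [List.map_cons, List.sum_cons, size]; omega)

theorem exists_rhoSeq_eq {S : Multiset ℤ} {b : ℤ} (hS : ∀ s ∈ S, b ≤ s) :
    ∃ ts : List BT, rhoSeq ts b = S := by
  induction hn : S.card using Nat.strong_induction_on generalizing S b with
  | _ n ih =>
  rcases eq_or_ne S 0 with rfl | hS0
  · exact ⟨[], rfl⟩
  obtain ⟨a, ha, hmin⟩ := S.exists_min_image id hS0
  obtain ⟨S', rfl⟩ := Multiset.exists_cons_of_mem ha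
  obtain ⟨ts, hts⟩ := ih _ (by simp [← hn]) (S := S') (b := a)
    (fun s hs => hmin s (Multiset.mem_cons_of_mem hs)) rfl
  -- two trailing empty trees make room for the two children of the new root at `a`
  obtain ⟨l, r, rest, hlr⟩ : ∃ l r rest, ts ++ List.replicate 2 leaf = l :: r :: rest := by
    rcases ts with _ | ⟨t, _ | ⟨u, v⟩⟩ <;> simp
  refine ⟨List.replicate (a - b).toNat leaf ++ node l r :: rest, ?_⟩
  rw [rhoSeq_replicate_leaf_append, Int.toNat_of_nonneg (by linarith [hS a ha]), add_sub_cancel,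
    rhoSeq_node_cons, ← hlr, rhoSeq_append_replicate_leaf, hts]

/-- Undoes the gap filling: empty trees are dropped, the others keep their positions. -/
def toLocated : List BT → ℤ → List (ℤ × BT)
  | [], _ => []
  | .leaf :: ts, b => toLocated ts (b + 1)
  | .node l r :: ts, b => (b, .node l r) :: toLocated ts (b + (node l r).size + 1)

theorem toLocated_replicate_leaf_append (n : ℕ) (ts : List BT) (b : ℤ) :
    toLocated (List.replicate n leaf ++ ts) b = toLocated ts (b + n) := by
  induction n generalizing b with
  | zero => simp
  | succ n ih =>
    rw [List.replicate_succ, List.cons_append, toLocated, ih]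
    congr 1
    push_cast
    ring

theorem toLocated_append_replicate_leaf (n : ℕ) : ∀ (ts : List BT) (b : ℤ),
    toLocated (ts ++ List.replicate n leaf) b = toLocated ts b
  | [], b => by simpa [toLocated] using toLocated_replicate_leaf_append n [] b
  | .leaf :: ts, b | .node _ _ :: ts, b => by
    rw [List.cons_append, toLocated, toLocated, toLocated_append_replicate_leaf n ts]

theorem le_fst_of_mem_toLocated {p : ℤ × BT} : ∀ {ts : List BT} {b : ℤ},
    p ∈ toLocated ts b → b ≤ p.1
  | [], _, h => by simp [toLocated] at h
  | .leaf :: _, b, h => by have := le_fst_of_mem_toLocated (b := b + 1) h; omega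
  | .node l r :: _, b, h => by
    rcases List.mem_cons.1 h with rfl | h
    · exact le_rfl
    · have := le_fst_of_mem_toLocated h; omega

theorem snd_ne_leaf_of_mem_toLocated {p : ℤ × BT} : ∀ {ts : List BT} {b : ℤ},
    p ∈ toLocated ts b → p.2 ≠ leaf
  | [], _, h => by simp [toLocated] at h
  | .leaf :: _, _, h => snd_ne_leaf_of_mem_toLocated (b := _ + 1) h
  | .node _ _ :: _, _, h => by
    rcases List.mem_cons.1 h with rfl | h
    · exact nofun
    · exact snd_ne_leaf_of_mem_toLocated h

theorem isChain_toLocated : ∀ (ts : List BT) (b : ℤ),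
    (toLocated ts b).IsChain fun p q => p.1 + (p.2.size : ℤ) + 1 ≤ q.1
  | [], _ => List.IsChain.nil
  | .leaf :: ts, b => isChain_toLocated ts (b + 1)
  | .node _ _ :: ts, _ => List.isChain_cons.2
      ⟨fun _ hq => le_fst_of_mem_toLocated (List.mem_of_mem_head? hq), isChain_toLocated ts _⟩

theorem sum_rhoMS_toLocated : ∀ (ts : List BT) (b : ℤ),
    ((toLocated ts b).map fun p => p.2.rhoMS p.1).sum = rhoSeq ts b
  | [], _ => rfl
  | .leaf :: ts, b => by rw [toLocated, rhoSeq_leaf_cons, sum_rhoMS_toLocated]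
  | .node l r :: ts, b => by
    rw [toLocated, List.map_cons, List.sum_cons, sum_rhoMS_toLocated, rhoSeq]

theorem exists_toLocated_eq : ∀ (L : List (ℤ × BT)) (b : ℤ), (∀ p ∈ L, p.2 ≠ leaf) →
    L.IsChain (fun p q => p.1 + (p.2.size : ℤ) + 1 ≤ q.1) → (∀ p ∈ L.head?, b ≤ p.1) →
    ∃ ts, toLocated ts b = L
  | [], _, _, _, _ => ⟨[], rfl⟩
  | (a, t) :: L, b, hne, hchain, hb => by
    obtain ⟨ts, hts⟩ := exists_toLocated_eq L (a + t.size + 1)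
      (fun p hp => hne p (List.mem_cons_of_mem _ hp)) hchain.tail (List.isChain_cons.1 hchain).1
    obtain ⟨l, r, rfl⟩ : ∃ l r, t = node l r := by
      cases t with
      | leaf => exact absurd rfl (hne _ List.mem_cons_self)
      | node l r => exact ⟨l, r, rfl⟩
    refine ⟨List.replicate (a - b).toNat leaf ++ node l r :: ts, ?_⟩
    rw [toLocated_replicate_leaf_append, Int.toNat_of_nonneg (by linarith [hb _ rfl]),
      add_sub_cancel, toLocated, hts]

end BT

namespace IndexedForest

theorem trees_injective : Function.Injective IndexedForest.trees := by
  rintro ⟨⟩ ⟨⟩ h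
  congr

theorem supp_subset_Ici_iff {F : IndexedForest} {b : ℤ} :
    F.Supp ⊆ Set.Ici b ↔ ∀ p ∈ F.trees, b ≤ p.1 := by
  refine ⟨fun h p hp => h ⟨p, hp, le_rfl, ?_⟩,
    fun h i ⟨p, hp, hpi, _⟩ => (h p hp).trans hpi⟩
  have := BT.size_pos (F.nonempty p hp)
  omega

theorem eq_of_rhoMS_eq {F G : IndexedForest} {b : ℤ} (hF : F.Supp ⊆ Set.Ici b)
    (hG : G.Supp ⊆ Set.Ici b) (h : F.rhoMS = G.rhoMS) : F = G := by
  obtain ⟨ts, hts⟩ := BT.exists_toLocated_eq F.trees b F.nonempty F.gaps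
    fun p hp => supp_subset_Ici_iff.1 hF p (List.mem_of_mem_head? hp)
  obtain ⟨ts', hts'⟩ := BT.exists_toLocated_eq G.trees b G.nonempty G.gaps
    fun p hp => supp_subset_Ici_iff.1 hG p (List.mem_of_mem_head? hp)
  have hrho : BT.rhoSeq ts b = BT.rhoSeq ts' b := by
    rw [← BT.sum_rhoMS_toLocated, ← BT.sum_rhoMS_toLocated, hts, hts']
    exact h
  -- trailing empty trees change neither `rhoSeq` nor `toLocated`, so they equalize the lengths
  have hpad : ts ++ .replicate ts'.length .leaf = ts' ++ .replicate ts.length .leaf :=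
    BT.eq_of_rhoSeq_eq (by simp [add_comm])
      (by simpa [BT.rhoSeq_append_replicate_leaf] using hrho)
  apply trees_injective
  rw [← hts, ← hts', ← BT.toLocated_append_replicate_leaf ts'.length,
    ← BT.toLocated_append_replicate_leaf ts.length ts', hpad]

theorem exists_rhoMS_eq {S : Multiset ℤ} {b : ℤ} (hS : ∀ s ∈ S, b ≤ s) :
    ∃ F : IndexedForest, F.Supp ⊆ Set.Ici b ∧ F.rhoMS = S := by
  obtain ⟨ts, hts⟩ := BT.exists_rhoSeq_eq hS
  refine ⟨⟨BT.toLocated ts b, fun _ => BT.snd_ne_leaf_of_mem_toLocated,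
    BT.isChain_toLocated ts b⟩, ?_, ?_⟩
  · exact supp_subset_Ici_iff.2 fun _ => BT.le_fst_of_mem_toLocated
  · exact (BT.sum_rhoMS_toLocated ts b).trans hts

theorem le_of_mem_rhoMS {F : IndexedForest} {b s : ℤ} (hF : F.Supp ⊆ Set.Ici b)
    (hs : s ∈ F.rhoMS) : b ≤ s := by
  obtain ⟨_, hS, hs⟩ := Multiset.exists_mem_of_mem_list_sum hs
  obtain ⟨p, hp, rfl⟩ := List.mem_map.1 hS
  exact (supp_subset_Ici_iff.1 hF p hp).trans (BT.le_of_mem_rhoMS hs)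

theorem rhoMS_nonneg {F : IndexedForest} (hF : F.Supp ⊆ Set.Ici 1) : ∀ s ∈ F.rhoMS, 0 ≤ s :=
  fun _ hs => zero_le_one.trans (le_of_mem_rhoMS hF hs)

theorem cOf_eq_exponentOf_rhoMS {F : IndexedForest} (hF : F.Supp ⊆ Set.Ici 1) (i : ℕ) :
    cOf F i = exponentOf F.rhoMS i :=
  (exponentOf_apply (rhoMS_nonneg hF) i).symm

theorem eq_of_exponentOf_rhoMS_eq {F G : IndexedForest} (hF : F.Supp ⊆ Set.Ici 1)
    (hG : G.Supp ⊆ Set.Ici 1) (h : exponentOf F.rhoMS = exponentOf G.rhoMS) : F = G :=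
  eq_of_rhoMS_eq hF hG (exponentOf_injOn (rhoMS_nonneg hF) (rhoMS_nonneg hG) h)

theorem exists_exponentOf_rhoMS_eq {m : ℕ →₀ ℕ} (hm : m 0 = 0) :
    ∃ F : IndexedForest, F.Supp ⊆ Set.Ici 1 ∧ exponentOf F.rhoMS = m := by
  obtain ⟨F, hF, hrho⟩ :=
    exists_rhoMS_eq (S := (Finsupp.toMultiset m).map ((↑) : ℕ → ℤ)) (b := 1) fun s hs => by
      obtain ⟨i, hi, rfl⟩ := Multiset.mem_map.1 hs
      have : i ≠ 0 := by
        rintro rfl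
        exact Finsupp.mem_support_iff.1 ((Finsupp.mem_toMultiset m 0).1 hi) hm
      omega
  exact ⟨F, hF, by rw [hrho, exponentOf_map_natCast]⟩

end IndexedForest

open MonomialOrder (colex colex_lt_iff colex_single_lt_single degree_X monic_X)

namespace BT

theorem polyAux_monic : ∀ (t : BT) (a : ℤ) (lo : ℕ), (lo : ℤ) ≤ a →
    colex.Monic (t.polyAux a lo) ∧ colex.degree (t.polyAux a lo) = exponentOf (t.rhoMS a)
  | .leaf, _, _, _ => by simp [polyAux, rhoMS]
  | .node l r, a, lo, hlo => by
    set E := exponentOf (l.rhoMS a) + exponentOf (r.rhoMS (a + l.size + 1))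
    have hterm : ∀ k ∈ Finset.Icc lo a.toNat,
        colex.Monic (X k * l.polyAux a k * r.polyAux (a + l.size + 1) (k + 1)) ∧
        colex.degree (X k * l.polyAux a k * r.polyAux (a + l.size + 1) (k + 1)) =
          Finsupp.single k 1 + E := by
      intro k hk
      obtain ⟨hk1, hk2⟩ := Finset.mem_Icc.1 hk
      obtain ⟨hl, hdl⟩ := polyAux_monic l a k (by omega)
      obtain ⟨hr, hdr⟩ := polyAux_monic r (a + l.size + 1) (k + 1) (by push_cast; omega)
      have hX : colex.Monic (X k : MvPolynomial ℕ ℚ) := monic_X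
      refine ⟨(hX.mul hl).mul hr, ?_⟩
      rw [(hX.mul hl).degree_mul hr, hX.degree_mul hl, degree_X, hdl, hdr, add_assoc]
    have ha : a.toNat ∈ Finset.Icc lo a.toNat := Finset.mem_Icc.2 ⟨by omega, le_rfl⟩
    rw [polyAux, ← Finset.add_sum_erase _ _ ha, rhoMS, exponentOf_cons, map_add,
      ← (hterm _ ha).2]
    refine (hterm _ ha).1.add_sum_of_degree_lt fun k hk => ?_
    obtain ⟨hne, hk⟩ := Finset.mem_erase.1 hk
    rw [(hterm k hk).2, (hterm _ ha).2, map_add, map_add]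
    exact add_lt_add_left (colex_single_lt_single ((Finset.mem_Icc.1 hk).2.lt_of_ne hne)) _

theorem polyAux_mem_supported : ∀ (t : BT) (a : ℤ) (lo : ℕ),
    t.polyAux a lo ∈ supported ℚ (Set.Ici lo)
  | .leaf, _, _ => by simp [polyAux]
  | .node l r, a, lo => by
    rw [polyAux]
    refine Subalgebra.sum_mem _ fun k hk => ?_
    have hk : lo ≤ k := (Finset.mem_Icc.1 hk).1
    refine Subalgebra.mul_mem _ (Subalgebra.mul_mem _ (X_mem_supported.2 hk) ?_) ?_
    · exact supported_mono (Set.Ici_subset_Ici.2 hk) (polyAux_mem_supported l a k)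
    · exact supported_mono (Set.Ici_subset_Ici.2 (by omega)) (polyAux_mem_supported r _ _)

end BT

theorem polyL_monic : ∀ ts : List (ℤ × BT), (∀ p ∈ ts, 1 ≤ p.1) →
    colex.Monic (polyL ts) ∧
      colex.degree (polyL ts) = exponentOf (ts.map fun p => p.2.rhoMS p.1).sum
  | [], _ => by simp [polyL]
  | p :: ts, h => by
    obtain ⟨hp, hdp⟩ := p.2.polyAux_monic p.1 1 (by exact_mod_cast h p List.mem_cons_self)
    obtain ⟨hts, hdts⟩ := polyL_monic ts fun q hq => h q (List.mem_cons_of_mem _ hq)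
    have hcons : polyL (p :: ts) = p.2.polyAux p.1 1 * polyL ts := by simp [polyL, BT.poly]
    rw [hcons, List.map_cons, List.sum_cons, map_add, ← hdp, ← hdts]
    exact ⟨hp.mul hts, hp.degree_mul hts⟩

namespace IndexedForest

theorem poly_monic {F : IndexedForest} (hF : F.Supp ⊆ Set.Ici 1) :
    colex.Monic F.poly ∧ colex.degree F.poly = exponentOf F.rhoMS :=
  polyL_monic F.trees (supp_subset_Ici_iff.1 hF)

theorem poly_mem_restrictSupport (F : IndexedForest) :
    F.poly ∈ restrictSupport ℚ {m | m 0 = 0} := by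
  have hF : F.poly ∈ supported ℚ (Set.Ici 1) :=
    Subalgebra.list_prod_mem _ fun f hf => by
      obtain ⟨p, -, rfl⟩ := List.mem_map.1 hf
      exact p.2.polyAux_mem_supported p.1 1
  exact fun m hm => mem_support_notMem_vars_zero hm fun h => by
    simpa using mem_supported.1 hF h

end IndexedForest

/-- the forest polynomials `β_F`, `F` ranging over positively
supported indexed forests, form a basis of `ℚ[x_1, x_2, …]` (the subspace of
`MvPolynomial ℕ ℚ` of polynomials not involving the variable `X 0`):
they are linearly independent and span that space. Moreover `x^{c(F)}` is the
revlex leading term of `β_F`: its coefficient is `1` and every other monomial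
`m` of `β_F` satisfies `m i < c(F) i` at the last index `i` where they differ. -/
theorem forest_polys_basis :
    LinearIndependent ℚ
      (fun F : {F : IndexedForest // ∀ i ∈ F.Supp, 1 ≤ i} => F.1.poly) ∧
    (∀ f : MvPolynomial ℕ ℚ, (∀ m ∈ f.support, m 0 = 0) →
      f ∈ Submodule.span ℚ
        (Set.range (fun F : {F : IndexedForest // ∀ i ∈ F.Supp, 1 ≤ i} =>
          F.1.poly))) ∧
    (∀ F : IndexedForest, (∀ i ∈ F.Supp, 1 ≤ i) → ∀ cF : ℕ →₀ ℕ,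
      (∀ i : ℕ, cF i = cOf F (i : ℤ)) →
      (MvPolynomial.coeff cF F.poly = 1 ∧
        ∀ m ∈ F.poly.support, m ≠ cF →
          ∃ i : ℕ, (∀ j : ℕ, i < j → m j = cF j) ∧ m i < cF i)) := by
  have hmonic (F : {F : IndexedForest // ∀ i ∈ F.Supp, 1 ≤ i}) := IndexedForest.poly_monic F.2
  refine ⟨?_, fun f hf => ?_, fun F hF cF hcF => ?_⟩
  · refine MonomialOrder.linearIndependent_of_monic (fun F => (hmonic F).1) fun F G h => ?_
    simp only [Function.comp_apply, (hmonic F).2, (hmonic G).2] at h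
    exact Subtype.ext (IndexedForest.eq_of_exponentOf_rhoMS_eq F.2 G.2 h)
  · refine MonomialOrder.restrictSupport_le_span_of_monic (fun F => (hmonic F).1)
      (fun F => F.1.poly_mem_restrictSupport) (fun m hm => ?_) ((mem_restrictSupport_iff ℚ).2 hf)
    obtain ⟨F, hF, hm⟩ := IndexedForest.exists_exponentOf_rhoMS_eq hm
    exact ⟨⟨F, hF⟩, (hmonic ⟨F, hF⟩).2.trans hm⟩
  · obtain ⟨hmon, hdeg⟩ := IndexedForest.poly_monic hF
    obtain rfl : cF = colex.degree F.poly := by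
      ext i
      rw [hcF, hdeg, IndexedForest.cOf_eq_exponentOf_rhoMS hF]
    refine ⟨hmon.coeff_degree, fun m hm hne => colex_lt_iff.1 ?_⟩
    exact lt_of_le_of_ne (colex.le_degree hm) fun h => hne (colex.toSyn.injective h)
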